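/- Let Ω ⊆ ℝ³ be open, let J ⊆ ℝ be an open interval with 0 ∉ J, let ε : Ω → ℝ, and let v : Ω × J → ℂ be infinitely differentiable (jointly in x and k). Assume that Δₓv(x,k) + ∇ₓv(x,k)·∇ₓv(x,k) = −k² ε(x) for all x ∈ Ω and k ∈ J. Then for all x ∈ Ω and k ∈ J, Δₓ(∂ₖv)(x,k) + 2 ∇ₓ(∂ₖv)(x,k)·∇ₓv(x,k) = (2/k)·(Δₓv(x,k) + ∇ₓv(x,k)·∇ₓv(x,k)). -/

import Mathlib

open scoped BigOperators

/-- Spatial partial derivative in direction `i` of a complex-valued function of `(x, k)`. -/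
noncomputable def pdx (i : Fin 3) (f : (Fin 3 → ℝ) × ℝ → ℂ) : (Fin 3 → ℝ) × ℝ → ℂ :=
  fun p => fderiv ℝ f p (Pi.single i 1, 0)

/-- Partial derivative with respect to the wavenumber `k`. -/
noncomputable def pdk (f : (Fin 3 → ℝ) × ℝ → ℂ) : (Fin 3 → ℝ) × ℝ → ℂ :=
  fun p => fderiv ℝ f p (0, 1)

/-- Spatial gradient. -/
noncomputable def gradx (f : (Fin 3 → ℝ) × ℝ → ℂ) (p : (Fin 3 → ℝ) × ℝ) : Fin 3 → ℂ :=
  fun i => pdx i f p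

/-- Spatial Laplacian. -/
noncomputable def lapx (f : (Fin 3 → ℝ) × ℝ → ℂ) (p : (Fin 3 → ℝ) × ℝ) : ℂ :=
  ∑ i, pdx i (pdx i f) p

/-- Bilinear (non-conjugated) dot product on `ℂ³`. -/
noncomputable def cdot (a b : Fin 3 → ℂ) : ℂ := ∑ i, a i * b i

/-!
Write `F(x, k) = Δₓv + ∇ₓv·∇ₓv`. Since `∂ₖ` commutes with the spatial derivatives of the smooth
function `v`, the product rule gives `∂ₖF = Δₓ(∂ₖv) + 2∇ₓ(∂ₖv)·∇ₓv`. On the other hand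
`F = −k²ε(x)` for `k` near the given wavenumber, so `∂ₖF = −2kε(x) = (2/k)F`, using `k ≠ 0`.
-/

open Filter Topology
open scoped ContDiff

section DirectionalDerivatives

variable {E F : Type*} [NormedAddCommGroup E] [NormedSpace ℝ E]
  [NormedAddCommGroup F] [NormedSpace ℝ F] {f : E → F}

theorem ContDiffOn.fderiv_apply_const {U : Set E} (hf : ContDiffOn ℝ ∞ f U) (hU : IsOpen U)
    (w : E) : ContDiffOn ℝ ∞ (fun p => fderiv ℝ f p w) U :=
  (hf.fderiv_of_isOpen hU (by exact_mod_cast le_top)).clm_apply contDiffOn_const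

theorem fderiv_fderiv_apply_comm {x : E} (hf : ContDiffAt ℝ 2 f x) (v w : E) :
    fderiv ℝ (fun y => fderiv ℝ f y v) x w = fderiv ℝ (fun y => fderiv ℝ f y w) x v := by
  have hd : DifferentiableAt ℝ (fderiv ℝ f) x :=
    (hf.fderiv_right (m := 1) le_rfl).differentiableAt one_ne_zero
  rw [fderiv_clm_apply hd (differentiableAt_const v), fderiv_clm_apply hd (differentiableAt_const w)]
  simpa using hf.isSymmSndFDerivAt (by simp) w v

end DirectionalDerivatives

section PartialDerivatives

variable {f : (Fin 3 → ℝ) × ℝ → ℂ} {U : Set ((Fin 3 → ℝ) × ℝ)}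

theorem ContDiffOn.pdx (hf : ContDiffOn ℝ ∞ f U) (hU : IsOpen U) (i : Fin 3) :
    ContDiffOn ℝ ∞ (pdx i f) U :=
  hf.fderiv_apply_const hU _

theorem pdk_pdx_comm {p : (Fin 3 → ℝ) × ℝ} (hf : ContDiffAt ℝ 2 f p) (i : Fin 3) :
    pdk (pdx i f) p = pdx i (pdk f) p :=
  fderiv_fderiv_apply_comm hf _ _

theorem pdk_pdx_pdx_comm (hf : ContDiffOn ℝ ∞ f U) (hU : IsOpen U) {p : (Fin 3 → ℝ) × ℝ}
    (hp : p ∈ U) (i j : Fin 3) : pdk (pdx j (pdx i f)) p = pdx j (pdx i (pdk f)) p := by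
  have hsmooth : ∀ {g : (Fin 3 → ℝ) × ℝ → ℂ}, ContDiffOn ℝ ∞ g U → ∀ q ∈ U, ContDiffAt ℝ 2 g q :=
    fun hg q hq => (hg.contDiffAt (hU.mem_nhds hq)).of_le (by norm_cast)
  have hnear : pdk (pdx i f) =ᶠ[𝓝 p] pdx i (pdk f) := by
    filter_upwards [hU.mem_nhds hp] with q hq using pdk_pdx_comm (hsmooth hf q hq) i
  rw [pdk_pdx_comm (hsmooth (hf.pdx hU i) p hp) j]
  exact DFunLike.congr_fun hnear.fderiv_eq _

theorem hasDerivAt_pdk {x : Fin 3 → ℝ} {k : ℝ} (hf : DifferentiableAt ℝ f (x, k)) :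
    HasDerivAt (fun t => f (x, t)) (pdk f (x, k)) k :=
  hf.hasFDerivAt.comp_hasDerivAt k ((hasDerivAt_const k x).prodMk (hasDerivAt_id k))

theorem hasDerivAt_lapx_add_cdot (hf : ContDiffOn ℝ ∞ f U) (hU : IsOpen U) {x : Fin 3 → ℝ}
    {k : ℝ} (hp : (x, k) ∈ U) :
    HasDerivAt (fun t => lapx f (x, t) + cdot (gradx f (x, t)) (gradx f (x, t)))
      (lapx (pdk f) (x, k) + 2 * cdot (gradx (pdk f) (x, k)) (gradx f (x, k))) k := by
  have hderiv : ∀ {g : (Fin 3 → ℝ) × ℝ → ℂ}, ContDiffOn ℝ ∞ g U → HasDerivAt (fun t => g (x, t)) (pdk g (x, k)) k :=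
    fun hg => hasDerivAt_pdk ((hg.contDiffAt (hU.mem_nhds hp)).differentiableAt (by simp))
  have hf2 : ContDiffAt ℝ 2 f (x, k) :=
    (hf.contDiffAt (hU.mem_nhds hp)).of_le (by norm_cast)
  have hlap : HasDerivAt (fun t => lapx f (x, t)) (lapx (pdk f) (x, k)) k := by
    simp only [lapx, ← pdk_pdx_pdx_comm hf hU hp]
    exact HasDerivAt.fun_sum fun i _ => hderiv ((hf.pdx hU i).pdx hU i)
  have hdot : HasDerivAt (fun t => cdot (gradx f (x, t)) (gradx f (x, t)))
      (2 * cdot (gradx (pdk f) (x, k)) (gradx f (x, k))) k := by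
    simp only [cdot, gradx, Finset.mul_sum, ← pdk_pdx_comm hf2]
    exact HasDerivAt.fun_sum fun i _ =>
      ((hderiv (hf.pdx hU i)).mul (hderiv (hf.pdx hU i))).congr_deriv (by ring)
  exact hlap.add hdot

end PartialDerivatives

/-- differentiating `Δₓv + ∇ₓv·∇ₓv = −k²ε` with respect to `k` yields
`Δₓ(∂ₖv) + 2∇ₓ(∂ₖv)·∇ₓv = (2/k)(Δₓv + ∇ₓv·∇ₓv)` on `Ω × J`. -/
theorem stmt1 (Ω : Set (Fin 3 → ℝ)) (hΩ : IsOpen Ω) (a b : ℝ)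
    (hJ : (0 : ℝ) ∉ Set.Ioo a b)
    (ε : (Fin 3 → ℝ) → ℝ) (v : (Fin 3 → ℝ) × ℝ → ℂ)
    (hv : ContDiffOn ℝ (⊤ : ℕ∞) v (Ω ×ˢ Set.Ioo a b))
    (heq : ∀ x ∈ Ω, ∀ k ∈ Set.Ioo a b,
      lapx v (x, k) + cdot (gradx v (x, k)) (gradx v (x, k)) = -((k : ℂ) ^ 2 * (ε x : ℂ))) :
    ∀ x ∈ Ω, ∀ k ∈ Set.Ioo a b,
      lapx (pdk v) (x, k) + 2 * cdot (gradx (pdk v) (x, k)) (gradx v (x, k)) =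
        (2 / (k : ℂ)) * (lapx v (x, k) + cdot (gradx v (x, k)) (gradx v (x, k))) := by
  intro x hx k hk
  have hk0 : (k : ℂ) ≠ 0 := by exact_mod_cast ne_of_mem_of_not_mem hk hJ
  have hquad : HasDerivAt (fun t : ℝ => -((t : ℂ) ^ 2 * (ε x : ℂ))) (-(2 * k * ε x)) k := by
    simpa using ((Complex.ofRealCLM.hasDerivAt (x := k)).pow 2).mul_const (ε x : ℂ) |>.fun_neg
  have hF : HasDerivAt (fun t => lapx v (x, t) + cdot (gradx v (x, t)) (gradx v (x, t)))
      (-(2 * k * ε x)) k := by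
    refine hquad.congr_of_eventuallyEq ?_
    filter_upwards [isOpen_Ioo.mem_nhds hk] with t ht using heq x hx t ht
  rw [(hasDerivAt_lapx_add_cdot hv (hΩ.prod isOpen_Ioo) ⟨hx, hk⟩).unique hF, heq x hx k hk]
  field_simp
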